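/- For every constant 0 < c < 1, there exist two convex 1-Lipschitz functions f(·; 1) and f(·; −1) on ℝ² (namely f(w; z) = max{0, −v_zᵀw + c‖v_z‖²} with v₁ = −(1/4, 3/4) and v₋₁ = −(0, 3/4)) such that, setting v₁ = −∇f(0; 1) and v₋₁ = −∇f(0; −1), for every η with c < (1/2)η < 1 one has ‖v₁ − v₋₁‖ ≥ 1/4 and f(ηv₁; z) = f(ηv₋₁; z) for each z ∈ {−1, 1}. -/

import Mathlib

/-
Both functions are hinges max{0, b − ⟨v, w⟩}: convex, ‖v‖-Lipschitz, and affine with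
gradient −v near any point where b − ⟨v, w⟩ > 0, in particular at 0. Since
⟨v_z, v_z'⟩ ≥ ‖v_z‖² / 2 for all z, z' ∈ {±1}, any η > 2c sends ηv₁ and ηv₋₁ into the
flat part of both hinges, where both functions vanish.
-/

open MeasureTheory

noncomputable section

abbrev Euc (d : ℕ) := EuclideanSpace ℝ (Fin d)

/-- The point `(x, y) ∈ ℝ²`. -/
def toE2 (x y : ℝ) : Euc 2 := (WithLp.equiv 2 (Fin 2 → ℝ)).symm ![x, y]

/-- The vectors `v₁ = −(1/4, 3/4)` (for `z = 1`, i.e. `true`) and `v₋₁ = −(0, 3/4)`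
(for `z = −1`, i.e. `false`). -/
def vvec : Bool → Euc 2
  | true => toE2 (-(1 / 4)) (-(3 / 4))
  | false => toE2 0 (-(3 / 4))

/-- `f(w; z) = max{0, −v_zᵀ w + c‖v_z‖²}`. -/
def fAux (c : ℝ) (z : Bool) (w : Euc 2) : ℝ :=
  max 0 (-(inner ℝ (vvec z) w : ℝ) + c * ‖vvec z‖ ^ 2)

section Hinge

variable {E : Type*} [NormedAddCommGroup E] [InnerProductSpace ℝ E] (v : E) (b : ℝ)

theorem convexOn_max_zero_neg_inner_add :
    ConvexOn ℝ Set.univ fun w => max 0 (-inner ℝ v w + b) :=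
  (convexOn_const 0 convex_univ).sup (((-innerₛₗ ℝ v).convexOn convex_univ).add_const b)

theorem lipschitzWith_max_zero_neg_inner_add :
    LipschitzWith ‖v‖₊ fun w => max 0 (-inner ℝ v w + b) := by
  refine LipschitzWith.const_max (LipschitzWith.of_dist_le_mul fun w w' => ?_) 0
  calc dist (-inner ℝ v w + b) (-inner ℝ v w' + b) = |inner ℝ v (w - w')| := by
        rw [Real.dist_eq, inner_sub_right, ← abs_neg]; ring_nf
    _ ≤ ‖v‖ * dist w w' := by rw [dist_eq_norm]; exact abs_real_inner_le_norm v _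

theorem hasGradientAt_max_zero_neg_inner_add [CompleteSpace E] {w₀ : E}
    (h : inner ℝ v w₀ < b) :
    HasGradientAt (fun w => max 0 (-inner ℝ v w + b)) (-v) w₀ := by
  have hlin : HasGradientAt (fun w => -inner ℝ v w + b) (-v) w₀ := by
    rw [hasGradientAt_iff_hasFDerivAt, map_neg]
    exact (innerSL ℝ v).hasFDerivAt.neg.add_const b
  have hpos : ∀ᶠ w in nhds w₀, 0 < -inner ℝ v w + b :=
    continuousAt_const.eventually_lt hlin.continuousAt (by linarith)
  exact hlin.congr_of_eventuallyEq (hpos.mono fun w hw => max_eq_right hw.le)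

end Hinge

theorem inner_toE2 (a b x y : ℝ) : inner ℝ (toE2 a b) (toE2 x y) = a * x + b * y := by
  simp only [toE2, WithLp.equiv_symm_apply, PiLp.inner_apply, RCLike.inner_apply,
    Real.ringHom_apply, Fin.sum_univ_two, Matrix.cons_val_zero, Matrix.cons_val_one]
  ring

theorem toE2_sub (a b x y : ℝ) : toE2 a b - toE2 x y = toE2 (a - x) (b - y) := by
  ext i; fin_cases i <;> simp [toE2]

theorem norm_toE2_sq (a b : ℝ) : ‖toE2 a b‖ ^ 2 = a ^ 2 + b ^ 2 := by
  rw [← real_inner_self_eq_norm_sq, inner_toE2]; ring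

theorem norm_vvec_sq_pos (z : Bool) : 0 < ‖vvec z‖ ^ 2 := by
  cases z <;> simp only [vvec, norm_toE2_sq] <;> norm_num

theorem norm_vvec_le_one (z : Bool) : ‖vvec z‖ ≤ 1 := by
  refine (sq_le_one_iff₀ (norm_nonneg _)).mp ?_
  cases z <;> simp only [vvec, norm_toE2_sq] <;> norm_num

theorem norm_vvec_sq_div_two_le_inner (z z' : Bool) :
    ‖vvec z‖ ^ 2 / 2 ≤ inner ℝ (vvec z) (vvec z') := by
  cases z <;> cases z' <;> simp only [vvec, norm_toE2_sq, inner_toE2] <;> norm_num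

theorem norm_vvec_true_sub_vvec_false : ‖vvec true - vvec false‖ = 1 / 4 := by
  rw [← sq_eq_sq₀ (norm_nonneg _) (by norm_num), vvec, vvec, toE2_sub, norm_toE2_sq]
  norm_num

theorem neg_gradient_fAux_zero (c : ℝ) (hc0 : 0 < c) (z : Bool) :
    -gradient (fAux c z) 0 = vvec z := by
  have h : inner ℝ (vvec z) (0 : Euc 2) < c * ‖vvec z‖ ^ 2 := by
    rw [inner_zero_right]; exact mul_pos hc0 (norm_vvec_sq_pos z)
  change -gradient (fun w => max 0 (-inner ℝ (vvec z) w + c * ‖vvec z‖ ^ 2)) 0 = vvec z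
  rw [(hasGradientAt_max_zero_neg_inner_add _ _ h).gradient, neg_neg]

theorem fAux_smul_vvec (c η : ℝ) (hc0 : 0 < c) (hη : 2 * c < η) (z z' : Bool) :
    fAux c z (η • vvec z') = 0 := by
  have hη0 : 0 ≤ η := by linarith
  have hle : c * ‖vvec z‖ ^ 2 ≤ η * inner ℝ (vvec z) (vvec z') :=
    calc c * ‖vvec z‖ ^ 2 ≤ η * (‖vvec z‖ ^ 2 / 2) := by
          nlinarith [norm_vvec_sq_pos z]
      _ ≤ η * inner ℝ (vvec z) (vvec z') :=
          mul_le_mul_of_nonneg_left (norm_vvec_sq_div_two_le_inner z z') hη0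
  rw [fAux, inner_smul_right]
  exact max_eq_left (by linarith)

theorem stmt11_general (c : ℝ) (hc0 : 0 < c) :
    (∀ z : Bool, ConvexOn ℝ Set.univ (fAux c z) ∧ LipschitzWith 1 (fAux c z)) ∧
    (-(gradient (fAux c true) 0) = vvec true ∧
      -(gradient (fAux c false) 0) = vvec false) ∧
    ‖(-(gradient (fAux c true) 0)) - (-(gradient (fAux c false) 0))‖ ≥ 1 / 4 ∧
    ∀ η : ℝ, c < (1 / 2) * η → (1 / 2) * η < 1 →
      ∀ z : Bool,
        fAux c z (η • (-(gradient (fAux c true) 0))) =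
          fAux c z (η • (-(gradient (fAux c false) 0))) := by
  have hgrad := neg_gradient_fAux_zero c hc0
  refine ⟨fun z => ⟨convexOn_max_zero_neg_inner_add _ _, ?_⟩, ⟨hgrad true, hgrad false⟩, ?_,
    fun η hη _ z => ?_⟩
  · exact (lipschitzWith_max_zero_neg_inner_add _ _).weaken (norm_vvec_le_one z)
  · rw [hgrad, hgrad, norm_vvec_true_sub_vvec_false]
  · rw [hgrad, hgrad, fAux_smul_vvec c η hc0 (by linarith), fAux_smul_vvec c η hc0 (by linarith)]

theorem stmt11 (c : ℝ) (hc0 : 0 < c) (hc1 : c < 1) :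
    (∀ z : Bool, ConvexOn ℝ Set.univ (fAux c z) ∧ LipschitzWith 1 (fAux c z)) ∧
    (-(gradient (fAux c true) 0) = vvec true ∧
      -(gradient (fAux c false) 0) = vvec false) ∧
    ‖(-(gradient (fAux c true) 0)) - (-(gradient (fAux c false) 0))‖ ≥ 1 / 4 ∧
    ∀ η : ℝ, c < (1 / 2) * η → (1 / 2) * η < 1 →
      ∀ z : Bool,
        fAux c z (η • (-(gradient (fAux c true) 0))) =
          fAux c z (η • (-(gradient (fAux c false) 0))) :=
  stmt11_general c hc0

end
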